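/- Validity of PICProp confidence intervals (Theorem 1). Let (Ω', P) be a probability space, X a type (the PDE domain), 𝒵 a type (the data space), z̄ ∈ 𝒵 the clean dataset, u : X → ℝ the exact solution, u_A : X → 𝒵 → ℝ a data-driven solver, and η ≥ 0 such that the solver is η-proper, i.e. |u_A x z̄ − u x| ≤ η for all x ∈ X. Let 𝒞 : Ω' → Set 𝒵 be a random confidence region such that for every ω and every x, the image set (fun z => u_A x z) '' 𝒞 ω is bounded above and bounded below, and suppose P {ω | z̄ ∈ 𝒞 ω} ≥ p. Define L ω x = sInf ((fun z => u_A x z) '' 𝒞 ω) − η and U ω x = sSup ((fun z => u_A x z) '' 𝒞 ω) + η. Then P {ω | ∀ x, L ω x ≤ u x ∧ u x ≤ U ω x} ≥ p. -/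

import Mathlib

open MeasureTheory

lemma csInf_sub_le_of_abs_sub_le {S : Set ℝ} (hS : BddBelow S) {a b η : ℝ} (ha : a ∈ S)
    (hab : |a - b| ≤ η) : sInf S - η ≤ b := by
  have := csInf_le hS ha
  linarith [(abs_le.mp hab).2]

lemma le_csSup_add_of_abs_sub_le {S : Set ℝ} (hS : BddAbove S) {a b η : ℝ} (ha : a ∈ S)
    (hab : |a - b| ≤ η) : b ≤ sSup S + η := by
  have := le_csSup hS ha
  linarith [(abs_le.mp hab).1]

theorem picprop_validity_general
    {Ω' : Type*} [MeasurableSpace Ω'] (P : Measure Ω')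
    {X 𝒵 : Type*} (zbar : 𝒵) (u : X → ℝ) (uA : X → 𝒵 → ℝ)
    (η : ℝ)
    (hproper : ∀ x : X, |uA x zbar - u x| ≤ η)
    (𝒞 : Ω' → Set 𝒵)
    (hbdd : ∀ (ω : Ω') (x : X),
      BddAbove ((fun z => uA x z) '' 𝒞 ω) ∧ BddBelow ((fun z => uA x z) '' 𝒞 ω))
    (p : ENNReal) (hp : P {ω | zbar ∈ 𝒞 ω} ≥ p) :
    P {ω | ∀ x : X,
        sInf ((fun z => uA x z) '' 𝒞 ω) - η ≤ u x ∧
        u x ≤ sSup ((fun z => uA x z) '' 𝒞 ω) + η} ≥ p := by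
  refine hp.trans (measure_mono fun ω hω x => ?_)
  have hmem : uA x zbar ∈ (fun z => uA x z) '' 𝒞 ω := Set.mem_image_of_mem _ hω
  exact ⟨csInf_sub_le_of_abs_sub_le (hbdd ω x).2 hmem (hproper x),
    le_csSup_add_of_abs_sub_le (hbdd ω x).1 hmem (hproper x)⟩

theorem picprop_validity
    {Ω' : Type*} [MeasurableSpace Ω'] (P : Measure Ω') [IsProbabilityMeasure P]
    {X 𝒵 : Type*} (zbar : 𝒵) (u : X → ℝ) (uA : X → 𝒵 → ℝ)
    (η : ℝ) (hη : 0 ≤ η)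
    (hproper : ∀ x : X, |uA x zbar - u x| ≤ η)
    (𝒞 : Ω' → Set 𝒵)
    (hbdd : ∀ (ω : Ω') (x : X),
      BddAbove ((fun z => uA x z) '' 𝒞 ω) ∧ BddBelow ((fun z => uA x z) '' 𝒞 ω))
    (p : ENNReal) (hp : P {ω | zbar ∈ 𝒞 ω} ≥ p) :
    P {ω | ∀ x : X,
        sInf ((fun z => uA x z) '' 𝒞 ω) - η ≤ u x ∧
        u x ≤ sSup ((fun z => uA x z) '' 𝒞 ω) + η} ≥ p :=
  picprop_validity_general P zbar u uA η hproper 𝒞 hbdd p hp
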